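/- Let r : [0,1] → ℝ be twice continuously differentiable. Then sup over ω ∈ Ω and t ∈ [0,1] of | n^{3/2} ∫_0^t ( ∫_0^s r(u) cos(2π H_n(ω,u)) du ) ds | tends to 0 as n → ∞. More precisely, ∫_0^t ∫_0^s r(u) cos(2π H_n(ω,u)) du ds = (1/(2πn)) ∫_0^t r(s) sin(2πns) ds + O(1/n²) uniformly in t and ω, and the first term is itself O(1/n²). -/

import Mathlib

/-!
On each cell `[k/n, (k+1)/n]` the path `H_n(ω, ·)` is an integer (the walk `S_k`) plus
`±(nu - k)`, so `cos (2π H_n(ω, u)) = cos (2π n u)` and the iterated integral does not depend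
on `ω`. Integrating by parts against `cos (2π n u)` and then against `sin (2π n u)` gains a
factor `1/(2πn)` each time, which gives the expansion with an `O(1/n²)` error and the
`O(1/n²)` bound on its main term; after multiplying by `n^{3/2}` what is left is `O(n^{-1/2})`.
-/

open MeasureTheory Real Set intervalIntegral Filter Topology

section OscillatoryIntegrals

variable {f f' f'' : ℝ → ℝ} {M M' c t : ℝ}

lemma abs_intervalIntegral_le_of_forall_abs_le {g : ℝ → ℝ}
    (hM : ∀ u ∈ Icc (0:ℝ) 1, |g u| ≤ M) (ht : t ∈ Icc (0:ℝ) 1) :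
    |∫ u in 0..t, g u| ≤ M := by
  have hM0 : 0 ≤ M := (abs_nonneg _).trans (hM 0 (left_mem_Icc.2 zero_le_one))
  calc |∫ u in 0..t, g u| ≤ M * |t - 0| :=
        intervalIntegral.norm_integral_le_of_norm_le_const fun u hu =>
          (Real.norm_eq_abs (g u)).trans_le
            (hM u (uIcc_subset_Icc (left_mem_Icc.2 zero_le_one) ht (uIoc_subset_uIcc hu)))
    _ ≤ M := by
        rw [sub_zero, abs_of_nonneg ht.1]
        exact mul_le_of_le_one_right hM0 ht.2

lemma integral_mul_cos_mul_eq (hf : ∀ u ∈ Icc (0:ℝ) 1, HasDerivWithinAt f (f' u) (Icc 0 1) u)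
    (hf' : ContinuousOn f' (Icc 0 1)) (hc : c ≠ 0) (ht : t ∈ Icc (0:ℝ) 1) :
    ∫ u in 0..t, f u * cos (c * u) =
      (f t * sin (c * t) - ∫ u in 0..t, f' u * sin (c * u)) / c := by
  have hsub := uIcc_subset_Icc (left_mem_Icc.2 zero_le_one) ht
  have hv (u : ℝ) : HasDerivAt (fun u => sin (c * u) / c) (cos (c * u)) u := by
    simpa [hc] using ((hasDerivAt_id u).const_mul c).sin.div_const c
  rw [integral_mul_deriv_eq_deriv_mul_of_hasDerivWithinAt
    (fun u hu => (hf u (hsub hu)).mono hsub) (fun u _ => (hv u).hasDerivWithinAt)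
    (hf'.mono hsub).intervalIntegrable ((by fun_prop : Continuous _).intervalIntegrable _ _)]
  simp_rw [← mul_div_assoc, intervalIntegral.integral_div]
  simp [sub_div]

lemma integral_mul_sin_mul_eq (hf : ∀ u ∈ Icc (0:ℝ) 1, HasDerivWithinAt f (f' u) (Icc 0 1) u)
    (hf' : ContinuousOn f' (Icc 0 1)) (hc : c ≠ 0) (ht : t ∈ Icc (0:ℝ) 1) :
    ∫ u in 0..t, f u * sin (c * u) =
      (f 0 - f t * cos (c * t) + ∫ u in 0..t, f' u * cos (c * u)) / c := by
  have hsub := uIcc_subset_Icc (left_mem_Icc.2 zero_le_one) ht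
  have hv (u : ℝ) : HasDerivAt (fun u => -cos (c * u) / c) (sin (c * u)) u := by
    simpa [hc] using ((hasDerivAt_id u).const_mul c).cos.neg.div_const c
  rw [integral_mul_deriv_eq_deriv_mul_of_hasDerivWithinAt
    (fun u hu => (hf u (hsub hu)).mono hsub) (fun u _ => (hv u).hasDerivWithinAt)
    (hf'.mono hsub).intervalIntegrable ((by fun_prop : Continuous _).intervalIntegrable _ _)]
  simp_rw [← mul_div_assoc, intervalIntegral.integral_div]
  simp only [mul_zero, cos_zero, mul_neg, intervalIntegral.integral_neg]
  ring

lemma abs_integral_mul_sin_mul_le (hf : ∀ u ∈ Icc (0:ℝ) 1, HasDerivWithinAt f (f' u) (Icc 0 1) u)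
    (hf' : ContinuousOn f' (Icc 0 1)) (hM : ∀ u ∈ Icc (0:ℝ) 1, |f u| ≤ M)
    (hM' : ∀ u ∈ Icc (0:ℝ) 1, |f' u| ≤ M') (hc : 0 < c) (ht : t ∈ Icc (0:ℝ) 1) :
    |∫ u in 0..t, f u * sin (c * u)| ≤ (2 * M + M') / c := by
  rw [integral_mul_sin_mul_eq hf hf' hc.ne' ht, abs_div, abs_of_pos hc]
  gcongr
  have hcos {g : ℝ → ℝ} {K : ℝ} (hK : ∀ u ∈ Icc (0:ℝ) 1, |g u| ≤ K) (u : ℝ)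
      (hu : u ∈ Icc (0:ℝ) 1) : |g u * cos (c * u)| ≤ K := by
    rw [abs_mul]
    exact (mul_le_of_le_one_right (abs_nonneg _) (abs_cos_le_one _)).trans (hK u hu)
  have h0 := hM 0 (left_mem_Icc.2 zero_le_one)
  have ht' := hcos hM t ht
  have hI := abs_intervalIntegral_le_of_forall_abs_le (hcos hM') ht
  calc _ ≤ |f 0| + |f t * cos (c * t)| + |∫ u in 0..t, f' u * cos (c * u)| :=
        (abs_add_le _ _).trans (add_le_add_left (abs_sub _ _) _)
    _ ≤ 2 * M + M' := by linarith

lemma integral_integral_mul_cos_mul_eq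
    (hf : ∀ u ∈ Icc (0:ℝ) 1, HasDerivWithinAt f (f' u) (Icc 0 1) u)
    (hf' : ContinuousOn f' (Icc 0 1)) (hc : c ≠ 0) (ht : t ∈ Icc (0:ℝ) 1) :
    ∫ s in 0..t, ∫ u in 0..s, f u * cos (c * u) =
      ((∫ s in 0..t, f s * sin (c * s)) - ∫ s in 0..t, ∫ u in 0..s, f' u * sin (c * u)) / c := by
  have hsub := uIcc_subset_Icc (left_mem_Icc.2 zero_le_one) ht
  have hfc : ContinuousOn f (Icc 0 1) := fun u hu => (hf u hu).continuousWithinAt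
  have hsin : Continuous fun u => sin (c * u) := by fun_prop
  have hI : IntervalIntegrable (fun s => f s * sin (c * s)) volume 0 t :=
    ((hfc.mono hsub).mul hsin.continuousOn).intervalIntegrable
  have hG : ContinuousOn (fun s => ∫ u in 0..s, f' u * sin (c * u)) (uIcc 0 t) :=
    continuousOn_primitive_interval
      (((hf'.mono hsub).mul hsin.continuousOn).integrableOn_compact isCompact_uIcc)
  rw [integral_congr fun s hs => integral_mul_cos_mul_eq hf hf' hc (hsub hs),
    intervalIntegral.integral_div, intervalIntegral.integral_sub hI hG.intervalIntegrable]

lemma abs_integral_integral_mul_cos_mul_sub_le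
    (hf : ∀ u ∈ Icc (0:ℝ) 1, HasDerivWithinAt f (f' u) (Icc 0 1) u)
    (hf' : ∀ u ∈ Icc (0:ℝ) 1, HasDerivWithinAt f' (f'' u) (Icc 0 1) u)
    (hf'' : ContinuousOn f'' (Icc 0 1)) (hM : ∀ u ∈ Icc (0:ℝ) 1, |f' u| ≤ M)
    (hM' : ∀ u ∈ Icc (0:ℝ) 1, |f'' u| ≤ M') (hc : 0 < c) (ht : t ∈ Icc (0:ℝ) 1) :
    |(∫ s in 0..t, ∫ u in 0..s, f u * cos (c * u)) - 1 / c * ∫ s in 0..t, f s * sin (c * s)| ≤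
      (2 * M + M') / c ^ 2 := by
  have hf'c : ContinuousOn f' (Icc 0 1) := fun u hu => (hf' u hu).continuousWithinAt
  rw [integral_integral_mul_cos_mul_eq hf hf'c hc.ne' ht, sub_div, one_div_mul_eq_div,
    sub_sub_cancel_left, abs_neg, abs_div, abs_of_pos hc, sq, ← div_div]
  gcongr
  exact abs_intervalIntegral_le_of_forall_abs_le
    (fun s hs => abs_integral_mul_sin_mul_le hf' hf'' hM hM' hc hs) ht

end OscillatoryIntegrals

lemma exists_forall_abs_le_of_continuousOn {g : ℝ → ℝ} (hg : ContinuousOn g (Icc (0:ℝ) 1)) :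
    ∃ M, 0 ≤ M ∧ ∀ u ∈ Icc (0:ℝ) 1, |g u| ≤ M := by
  obtain ⟨M, hM⟩ := isCompact_Icc.exists_bound_of_continuousOn hg
  exact ⟨M, (norm_nonneg _).trans (hM 0 (left_mem_Icc.2 zero_le_one)), hM⟩

lemma exists_bound_integral_integral_mul_cos {f f' f'' : ℝ → ℝ}
    (hf : ∀ u ∈ Icc (0:ℝ) 1, HasDerivWithinAt f (f' u) (Icc 0 1) u)
    (hf' : ∀ u ∈ Icc (0:ℝ) 1, HasDerivWithinAt f' (f'' u) (Icc 0 1) u)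
    (hf'' : ContinuousOn f'' (Icc 0 1)) :
    ∃ C : ℝ, 0 ≤ C ∧ ∀ n : ℕ, 1 ≤ n → ∀ t ∈ Icc (0:ℝ) 1,
      |(∫ s in 0..t, ∫ u in 0..s, f u * cos (2 * π * n * u)) -
        1 / (2 * π * n) * ∫ s in 0..t, f s * sin (2 * π * n * s)| ≤ C / n ^ 2 ∧
      |1 / (2 * π * n) * ∫ s in 0..t, f s * sin (2 * π * n * s)| ≤ C / n ^ 2 := by
  have hf'c : ContinuousOn f' (Icc 0 1) := fun u hu => (hf' u hu).continuousWithinAt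
  obtain ⟨M₀, hM₀0, hM₀⟩ :=
    exists_forall_abs_le_of_continuousOn fun u hu => (hf u hu).continuousWithinAt
  obtain ⟨M₁, hM₁0, hM₁⟩ := exists_forall_abs_le_of_continuousOn hf'c
  obtain ⟨M₂, hM₂0, hM₂⟩ := exists_forall_abs_le_of_continuousOn hf''
  refine ⟨(2 * M₀ + M₁) + (2 * M₁ + M₂), by positivity, fun n hn t ht => ?_⟩
  have hn0 : (0:ℝ) < n := by exact_mod_cast hn
  have hc : 0 < 2 * π * n := by positivity
  have hsq {K : ℝ} (hK : 0 ≤ K) : K / (2 * π * n) ^ 2 ≤ K / n ^ 2 :=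
    div_le_div_of_nonneg_left hK (by positivity)
      (pow_le_pow_left₀ hn0.le (le_mul_of_one_le_left hn0.le (by linarith [pi_gt_three])) 2)
  constructor
  · calc _ ≤ (2 * M₁ + M₂) / (2 * π * n) ^ 2 :=
          abs_integral_integral_mul_cos_mul_sub_le hf hf' hf'' hM₁ hM₂ hc ht
      _ ≤ (2 * M₁ + M₂) / n ^ 2 := hsq (by positivity)
      _ ≤ _ := by gcongr ?_ / _; linarith
  · calc _ = |∫ s in 0..t, f s * sin (2 * π * n * s)| / (2 * π * n) := by
          rw [abs_mul, abs_of_pos (one_div_pos.2 hc), one_div_mul_eq_div]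
      _ ≤ (2 * M₀ + M₁) / (2 * π * n) / (2 * π * n) := by
          gcongr; exact abs_integral_mul_sin_mul_le hf hf'c hM₀ hM₁ hc ht
      _ ≤ (2 * M₀ + M₁) / n ^ 2 := by rw [div_div, ← sq]; exact hsq (by positivity)
      _ ≤ _ := by gcongr ?_ / _; linarith

lemma exists_nat_le_pred_div_le_le_succ_div {n : ℕ} (hn : 1 ≤ n) {u : ℝ}
    (hu : u ∈ Icc (0:ℝ) 1) :
    ∃ k : ℕ, k ≤ n - 1 ∧ (k : ℝ) / n ≤ u ∧ u ≤ ((k : ℝ) + 1) / n := by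
  have hn0 : (0:ℝ) < n := by exact_mod_cast hn
  refine ⟨min ⌊n * u⌋₊ (n - 1), min_le_right _ _, ?_, ?_⟩
  · rw [div_le_iff₀' hn0]
    exact (Nat.cast_le.2 (min_le_left _ _)).trans (Nat.floor_le (by positivity [hu.1]))
  · rw [le_div_iff₀' hn0]
    rcases min_choice ⌊n * u⌋₊ (n - 1) with h | h <;> rw [h]
    · exact (Nat.lt_floor_add_one _).le
    · rw [Nat.cast_pred hn, sub_add_cancel]
      exact mul_le_of_le_one_right hn0.le hu.2

lemma exists_int_sum_eq {ι : Type*} (s : Finset ι) {Y : ι → ℝ}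
    (hY : ∀ i ∈ s, ∃ m : ℤ, Y i = m) : ∃ m : ℤ, ∑ i ∈ s, Y i = m := by
  choose! Z hZ using hY
  exact ⟨∑ i ∈ s, Z i, by push_cast; exact Finset.sum_congr rfl hZ⟩

lemma cos_two_pi_mul_int_add_sign_mul (m k : ℤ) {ε : ℝ} (hε : ε = 1 ∨ ε = -1) (y : ℝ) :
    cos (2 * π * (m + ε * (y - k))) = cos (2 * π * y) := by
  rcases hε with rfl | rfl
  · rw [show 2 * π * (m + 1 * (y - k)) = 2 * π * y + ((m - k : ℤ) : ℝ) * (2 * π) by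
      push_cast; ring, cos_add_int_mul_two_pi]
  · rw [show 2 * π * (m + -1 * (y - k)) = -(2 * π * y) + ((m + k : ℤ) : ℝ) * (2 * π) by
      push_cast; ring, cos_add_int_mul_two_pi, cos_neg]

lemma cos_two_pi_mul_eq_of_piecewise_linear {n : ℕ} (hn : 1 ≤ n) {h : ℝ → ℝ} {Y : ℕ → ℝ}
    (hY : ∀ k, Y k = 1 ∨ Y k = -1)
    (hh : ∀ k : ℕ, k ≤ n - 1 → ∀ u : ℝ, (k : ℝ) / n ≤ u → u ≤ ((k : ℝ) + 1) / n →
      h u = (∑ i ∈ Finset.range k, Y (i + 1)) + n * Y (k + 1) * (u - (k : ℝ) / n))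
    {u : ℝ} (hu : u ∈ Icc (0:ℝ) 1) :
    cos (2 * π * h u) = cos (2 * π * n * u) := by
  have hn0 : (n : ℝ) ≠ 0 := by positivity
  obtain ⟨k, hk, hlo, hhi⟩ := exists_nat_le_pred_div_le_le_succ_div hn hu
  obtain ⟨m, hm⟩ := exists_int_sum_eq (Finset.range k) (Y := fun i => Y (i + 1)) fun i _ =>
    (hY (i + 1)).elim (fun hi => ⟨1, by simp [hi]⟩) (fun hi => ⟨-1, by simp [hi]⟩)
  have harg : h u = m + Y (k + 1) * (n * u - (k : ℤ)) := by
    rw [hh k hk u hlo hhi, hm]; push_cast; field_simp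
  rw [harg, cos_two_pi_mul_int_add_sign_mul m k (hY (k + 1)), ← mul_assoc]

lemma integral_integral_congr_of_eqOn {g h : ℝ → ℝ} (hgh : EqOn g h (Icc (0:ℝ) 1)) {t : ℝ}
    (ht : t ∈ Icc (0:ℝ) 1) :
    ∫ s in 0..t, ∫ u in 0..s, g u = ∫ s in 0..t, ∫ u in 0..s, h u := by
  have h01 : (0:ℝ) ∈ Icc (0:ℝ) 1 := left_mem_Icc.2 zero_le_one
  refine integral_congr fun s hs => integral_congr fun u hu => hgh ?_
  exact uIcc_subset_Icc h01 (uIcc_subset_Icc h01 ht hs) hu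

lemma exists_forall_abs_rpow_three_halves_mul_le (C : ℝ) {ε : ℝ} (hε : 0 < ε) :
    ∃ N : ℕ, ∀ n ≥ N, ∀ D : ℝ, |D| ≤ C / n ^ 2 → |(n : ℝ) ^ ((3:ℝ) / 2) * D| ≤ ε := by
  have hlim : Tendsto (fun n : ℕ => C * (n : ℝ) ^ (-(1 / 2 : ℝ))) atTop (𝓝 0) := by
    simpa using ((tendsto_rpow_neg_atTop (by norm_num : (0:ℝ) < 1 / 2)).comp
      tendsto_natCast_atTop_atTop).const_mul C
  obtain ⟨N, hN⟩ := eventually_atTop.1 (hlim.eventually_le_const hε)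
  refine ⟨max N 1, fun n hn D hD => ?_⟩
  have hn0 : (0:ℝ) < n := by exact_mod_cast (le_of_max_le_right hn)
  calc |(n : ℝ) ^ ((3:ℝ) / 2) * D| ≤ (n : ℝ) ^ ((3:ℝ) / 2) * (C / n ^ 2) := by
        rw [abs_mul, abs_of_nonneg (by positivity)]; gcongr
    _ = C * (n : ℝ) ^ (-(1 / 2 : ℝ)) := by
        rw [← rpow_two, mul_div_assoc', mul_comm, mul_div_assoc, ← rpow_sub hn0]; norm_num
    _ ≤ ε := hN n (le_of_max_le_left hn)

theorem scaled_r_cos_double_integral_vanishes_general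
    {Ω : Type*}
    (X : ℕ → Ω → ℝ)
    (hpm : ∀ k ω, X k ω = 1 ∨ X k ω = -1)
    (H : ℕ → Ω → ℝ → ℝ)
    (hH : ∀ n : ℕ, 1 ≤ n → ∀ (ω : Ω) (k : ℕ), k ≤ n - 1 → ∀ u : ℝ,
      (k : ℝ) / n ≤ u → u ≤ ((k : ℝ) + 1) / n →
      H n ω u = (∑ i ∈ Finset.range k, X (i + 1) ω) + n * X (k + 1) ω * (u - (k : ℝ) / n))
    (r r' r'' : ℝ → ℝ)
    (hr : ∀ u ∈ Set.Icc (0:ℝ) 1, HasDerivWithinAt r (r' u) (Set.Icc 0 1) u)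
    (hr' : ∀ u ∈ Set.Icc (0:ℝ) 1, HasDerivWithinAt r' (r'' u) (Set.Icc 0 1) u)
    (hr'' : ContinuousOn r'' (Set.Icc 0 1)) :
    (∀ ε : ℝ, 0 < ε → ∃ N : ℕ, ∀ n : ℕ, N ≤ n → ∀ (ω : Ω), ∀ t ∈ Set.Icc (0:ℝ) 1,
      |(n : ℝ) ^ ((3:ℝ)/2) *
        ∫ s in (0:ℝ)..t, (∫ u in (0:ℝ)..s, r u * Real.cos (2 * π * H n ω u))| ≤ ε) ∧
    (∃ C : ℝ, 0 ≤ C ∧ ∀ (n : ℕ), 1 ≤ n → ∀ (ω : Ω), ∀ t ∈ Set.Icc (0:ℝ) 1,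
      |(∫ s in (0:ℝ)..t, (∫ u in (0:ℝ)..s, r u * Real.cos (2 * π * H n ω u))) -
        (1 / (2 * π * n)) * ∫ s in (0:ℝ)..t, r s * Real.sin (2 * π * n * s)| ≤ C / n ^ 2 ∧
      |(1 / (2 * π * n)) * ∫ s in (0:ℝ)..t, r s * Real.sin (2 * π * n * s)| ≤ C / n ^ 2) := by
  obtain ⟨C, hC0, hC⟩ := exists_bound_integral_integral_mul_cos hr hr' hr''
  have hcos (n : ℕ) (hn : 1 ≤ n) (ω : Ω) (t : ℝ) (ht : t ∈ Icc (0:ℝ) 1) :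
      ∫ s in 0..t, ∫ u in 0..s, r u * cos (2 * π * H n ω u) =
        ∫ s in 0..t, ∫ u in 0..s, r u * cos (2 * π * n * u) :=
    integral_integral_congr_of_eqOn (fun u hu => congrArg (r u * ·)
      (cos_two_pi_mul_eq_of_piecewise_linear hn (hpm · ω) (hH n hn ω) hu)) ht
  refine ⟨fun ε hε => ?_, C, hC0, fun n hn ω t ht => hcos n hn ω t ht ▸ hC n hn t ht⟩
  obtain ⟨N, hN⟩ := exists_forall_abs_rpow_three_halves_mul_le (2 * C) hε
  refine ⟨max N 1, fun n hn ω t ht => hN n (le_of_max_le_left hn) _ ?_⟩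
  obtain ⟨hdiff, hsin⟩ := hC n (le_of_max_le_right hn) t ht
  rw [hcos n (le_of_max_le_right hn) ω t ht]
  have := (abs_sub_abs_le_abs_sub _ _).trans hdiff
  rw [mul_div_assoc, two_mul (C / _)]
  linarith

/-- For `r` of class `C²` on `[0,1]`, the quantity
`n^{3/2} ∫_0^t ∫_0^s r(u) cos(2πH_n(ω,u)) du ds` tends to `0` uniformly in `t` and `ω`;
more precisely the iterated integral equals `(1/(2πn)) ∫_0^t r(s) sin(2πns) ds + O(1/n²)`
uniformly, and the first term is itself `O(1/n²)`. -/
theorem scaled_r_cos_double_integral_vanishes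
    {Ω : Type*} [MeasurableSpace Ω] (P : MeasureTheory.Measure Ω)
    [MeasureTheory.IsProbabilityMeasure P]
    (X : ℕ → Ω → ℝ) (hXmeas : ∀ k, Measurable (X k))
    (hiid : ProbabilityTheory.iIndepFun X P)
    (hdist : ∀ k, P {ω | X k ω = 1} = 1/2 ∧ P {ω | X k ω = -1} = 1/2)
    (hpm : ∀ k ω, X k ω = 1 ∨ X k ω = -1)
    (H : ℕ → Ω → ℝ → ℝ)
    (hH : ∀ n : ℕ, 1 ≤ n → ∀ (ω : Ω) (k : ℕ), k ≤ n - 1 → ∀ u : ℝ,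
      (k : ℝ) / n ≤ u → u ≤ ((k : ℝ) + 1) / n →
      H n ω u = (∑ i ∈ Finset.range k, X (i + 1) ω) + n * X (k + 1) ω * (u - (k : ℝ) / n))
    (r r' r'' : ℝ → ℝ)
    (hr : ∀ u ∈ Set.Icc (0:ℝ) 1, HasDerivWithinAt r (r' u) (Set.Icc 0 1) u)
    (hr' : ∀ u ∈ Set.Icc (0:ℝ) 1, HasDerivWithinAt r' (r'' u) (Set.Icc 0 1) u)
    (hr'' : ContinuousOn r'' (Set.Icc 0 1)) :
    (∀ ε : ℝ, 0 < ε → ∃ N : ℕ, ∀ n : ℕ, N ≤ n → ∀ (ω : Ω), ∀ t ∈ Set.Icc (0:ℝ) 1,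
      |(n : ℝ) ^ ((3:ℝ)/2) *
        ∫ s in (0:ℝ)..t, (∫ u in (0:ℝ)..s, r u * Real.cos (2 * π * H n ω u))| ≤ ε) ∧
    (∃ C : ℝ, 0 ≤ C ∧ ∀ (n : ℕ), 1 ≤ n → ∀ (ω : Ω), ∀ t ∈ Set.Icc (0:ℝ) 1,
      |(∫ s in (0:ℝ)..t, (∫ u in (0:ℝ)..s, r u * Real.cos (2 * π * H n ω u))) -
        (1 / (2 * π * n)) * ∫ s in (0:ℝ)..t, r s * Real.sin (2 * π * n * s)| ≤ C / n ^ 2 ∧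
      |(1 / (2 * π * n)) * ∫ s in (0:ℝ)..t, r s * Real.sin (2 * π * n * s)| ≤ C / n ^ 2) :=
  scaled_r_cos_double_integral_vanishes_general X hpm H hH r r' r'' hr hr' hr''
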